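/- arXiv:2307.09784 — 7 statements merged into one kernel-verified Lean document; each statement's English description precedes it below -/
import Mathlib

section
/- Let R be a commutative local ring with unity whose maximal ideal M is generated by two elements x, y with x² = y² = 0, where {x, y} is a minimal generating set of M. Then for units u, v of R, the ideals ⟨x + uy⟩ and ⟨x + vy⟩ are equal if and only if u − v ∈ M. -/
theorem stmt_0 {R : Type*} [CommRing R] [IsLocalRing R]
    (x y : R) (hx2 : x ^ 2 = 0) (hy2 : y ^ 2 = 0)
    (hM : IsLocalRing.maximalIdeal R = Ideal.span {x, y})
    (hxy : x ∉ Ideal.span ({y} : Set R)) (hyx : y ∉ Ideal.span ({x} : Set R))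
    (u v : Rˣ) :
    Ideal.span ({x + (u : R) * y} : Set R) = Ideal.span ({x + (v : R) * y} : Set R) ↔
      (u : R) - (v : R) ∈ IsLocalRing.maximalIdeal R := by
  have keyA : ∀ a b : R, a * x + b * y = 0 → a ∈ IsLocalRing.maximalIdeal R := by
    intro a b hab
    by_contra ha
    have hua : IsUnit a := by
      by_contra h
      exact ha (IsLocalRing.mem_maximalIdeal a |>.mpr h)
    obtain ⟨w, rfl⟩ := hua
    apply hxy
    rw [Ideal.mem_span_singleton']
    refine ⟨-(↑w⁻¹ * b), ?_⟩
    have : (w : R) * x = -(b * y) := by linear_combination hab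
    calc -(↑w⁻¹ * b) * y = ↑w⁻¹ * -(b * y) := by ring
      _ = ↑w⁻¹ * ((w : R) * x) := by rw [this]
      _ = x := by rw [← mul_assoc, Units.inv_mul, one_mul]
  have keyB : ∀ b a : R, a * x + b * y = 0 → b ∈ IsLocalRing.maximalIdeal R := by
    intro b a hab
    by_contra hb
    have hub : IsUnit b := by
      by_contra h
      exact hb (IsLocalRing.mem_maximalIdeal b |>.mpr h)
    obtain ⟨w, rfl⟩ := hub
    apply hyx
    rw [Ideal.mem_span_singleton']
    refine ⟨-(↑w⁻¹ * a), ?_⟩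
    have : (w : R) * y = -(a * x) := by linear_combination hab
    calc -(↑w⁻¹ * a) * x = ↑w⁻¹ * -(a * x) := by ring
      _ = ↑w⁻¹ * ((w : R) * y) := by rw [this]
      _ = y := by rw [← mul_assoc, Units.inv_mul, one_mul]
  have key2 : ∀ s t : Rˣ, (s : R) - (t : R) ∈ IsLocalRing.maximalIdeal R →
      x + (s : R) * y ∈ Ideal.span ({x + (t : R) * y} : Set R) := by
    intro s t hst
    rw [hM, Ideal.mem_span_pair] at hst
    obtain ⟨a, b, hab⟩ := hst
    rw [Ideal.mem_span_singleton']
    refine ⟨1 + a * y, ?_⟩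
    linear_combination y * hab + (a * (t : R) - b) * hy2
  constructor
  · intro h
    have hmem : x + (u : R) * y ∈ Ideal.span ({x + (v : R) * y} : Set R) := by
      rw [← h]; exact Ideal.subset_span rfl
    rw [Ideal.mem_span_singleton'] at hmem
    obtain ⟨r, hr⟩ := hmem
    have h1 : (1 - r) * x + ((u : R) - r * (v : R)) * y = 0 := by
      linear_combination -hr
    have hA := keyA _ _ h1
    have hB := keyB _ _ h1
    have heq : (u : R) - (v : R) = ((u : R) - r * v) - (1 - r) * v := by ring
    rw [heq]
    exact Ideal.sub_mem _ hB (Ideal.mul_mem_right _ _ hA)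
  · intro h
    apply le_antisymm
    · rw [Ideal.span_le, Set.singleton_subset_iff]
      exact key2 u v h
    · rw [Ideal.span_le, Set.singleton_subset_iff]
      refine key2 v u ?_
      have : (v : R) - u = -((u : R) - v) := by ring
      rw [this]; exact neg_mem h
end

section
/- Let R be a commutative local ring with maximal ideal M = ⟨x, y⟩ where {x, y} is a minimal generating set, x² = y² = 0, and xy = 0. Then every nonzero proper ideal of R is one of: M, ⟨x⟩, ⟨y⟩, or ⟨x + uy⟩ for some unit u of R. -/
theorem stmt_2 {R : Type*} [CommRing R] [IsLocalRing R]
    (x y : R) (hx2 : x ^ 2 = 0) (hy2 : y ^ 2 = 0) (hxy0 : x * y = 0)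
    (hM : IsLocalRing.maximalIdeal R = Ideal.span {x, y})
    (hxy : x ∉ Ideal.span ({y} : Set R)) (hyx : y ∉ Ideal.span ({x} : Set R))
    (I : Ideal R) (hI0 : I ≠ ⊥) (hI1 : I ≠ ⊤) :
    I = IsLocalRing.maximalIdeal R ∨ I = Ideal.span {x} ∨ I = Ideal.span {y} ∨
      ∃ u : Rˣ, I = Ideal.span {x + (u : R) * y} := by
  have hIM : I ≤ IsLocalRing.maximalIdeal R := IsLocalRing.le_maximalIdeal hI1
  have hunit : ∀ a : R, IsUnit a ∨ a * x = 0 ∧ a * y = 0 := by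
    intro a
    by_cases h : IsUnit a
    · exact Or.inl h
    · have ha : a ∈ IsLocalRing.maximalIdeal R := (IsLocalRing.mem_maximalIdeal _).mpr h
      rw [hM, Ideal.mem_span_pair] at ha
      obtain ⟨c, d, rfl⟩ := ha
      refine Or.inr ⟨?_, ?_⟩
      · have : (c * x + d * y) * x = c * x ^ 2 + d * (x * y) := by ring
        rw [this, hx2, hxy0]; ring
      · have : (c * x + d * y) * y = c * (x * y) + d * y ^ 2 := by ring
        rw [this, hy2, hxy0]; ring
  have hIeqM : x ∈ I → y ∈ I → I = IsLocalRing.maximalIdeal R := by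
    intro hx hy
    refine le_antisymm hIM ?_
    rw [hM, Ideal.span_le]
    rintro z (rfl | rfl) <;> simpa
  obtain ⟨z, hzI, hz0⟩ := Submodule.exists_mem_ne_zero_of_ne_bot hI0
  have hzM := hIM hzI
  rw [hM, Ideal.mem_span_pair] at hzM
  obtain ⟨a, b, rfl⟩ := hzM
  rcases hunit a with ha | ⟨hax, hay⟩
  · rcases hunit b with hb | ⟨hbx, hby⟩
    · -- both units: generator x + u y with u = ua⁻¹ * ub
      obtain ⟨ua, rfl⟩ := ha
      obtain ⟨ub, rfl⟩ := hb
      set u : Rˣ := ua⁻¹ * ub with hu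
      have ht : x + (u : R) * y ∈ I := by
        have heq : x + (u : R) * y = (↑ua⁻¹ : R) * ((ua : R) * x + (ub : R) * y) := by
          rw [hu]
          push_cast
          linear_combination (-x : R) * ua.inv_mul
        rw [heq]
        exact I.mul_mem_left _ hzI
      by_cases hall : ∀ w ∈ I, w ∈ Ideal.span {x + (u : R) * y}
      · refine Or.inr (Or.inr (Or.inr ⟨u, le_antisymm hall ?_⟩))
        rw [Ideal.span_le, Set.singleton_subset_iff]
        exact ht
      · push_neg at hall
        obtain ⟨w, hwI, hw⟩ := hall
        have hwM := hIM hwI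
        rw [hM, Ideal.mem_span_pair] at hwM
        obtain ⟨c, d, rfl⟩ := hwM
        rcases hunit (d - c * (u : R)) with hdu | ⟨h1, h2⟩
        · obtain ⟨v, hv⟩ := hdu
          have hsub : c * x + d * y - c * (x + (u : R) * y) ∈ I :=
            I.sub_mem hwI (I.mul_mem_left c ht)
          have hyI : y ∈ I := by
            have heq : y = (↑v⁻¹ : R) * (c * x + d * y - c * (x + (u : R) * y)) := by
              have : c * x + d * y - c * (x + (u : R) * y) = (d - c * (u : R)) * y := by ring
              rw [this, ← hv]
              linear_combination (-y : R) * v.inv_mul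
            rw [heq]
            exact I.mul_mem_left _ hsub
          have hxI : x ∈ I := by
            have heq : x = (x + (u : R) * y) - (u : R) * y := by ring
            rw [heq]
            exact I.sub_mem ht (I.mul_mem_left _ hyI)
          exact Or.inl (hIeqM hxI hyI)
        · exfalso
          apply hw
          rw [Ideal.mem_span_singleton]
          refine ⟨c, ?_⟩
          have : c * x + d * y = c * (x + (u : R) * y) + (d - c * (u : R)) * y := by ring
          rw [this, h2, add_zero, mul_comm]
    · -- a unit, b not: generator x
      obtain ⟨ua, rfl⟩ := ha
      have hxI : x ∈ I := by
        have heq : x = (↑ua⁻¹ : R) * ((ua : R) * x + b * y) := by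
          rw [hby]
          linear_combination (-x : R) * ua.inv_mul
        rw [heq]
        exact I.mul_mem_left _ hzI
      by_cases hall : ∀ w ∈ I, w ∈ Ideal.span ({x} : Set R)
      · refine Or.inr (Or.inl (le_antisymm hall ?_))
        rw [Ideal.span_le, Set.singleton_subset_iff]
        exact hxI
      · push_neg at hall
        obtain ⟨w, hwI, hw⟩ := hall
        have hwM := hIM hwI
        rw [hM, Ideal.mem_span_pair] at hwM
        obtain ⟨c, d, rfl⟩ := hwM
        rcases hunit d with hd | ⟨h1, h2⟩
        · obtain ⟨v, hv⟩ := hd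
          have hsub : c * x + d * y - c * x ∈ I := I.sub_mem hwI (I.mul_mem_left c hxI)
          have hyI : y ∈ I := by
            have heq : y = (↑v⁻¹ : R) * (c * x + d * y - c * x) := by
              have : c * x + d * y - c * x = d * y := by ring
              rw [this, ← hv]
              linear_combination (-y : R) * v.inv_mul
            rw [heq]
            exact I.mul_mem_left _ hsub
          exact Or.inl (hIeqM hxI hyI)
        · exfalso
          apply hw
          rw [Ideal.mem_span_singleton]
          exact ⟨c, by rw [h2]; ring⟩
  · rcases hunit b with hb | ⟨hbx, hby⟩
    · -- b unit, a not: generator y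
      obtain ⟨ub, rfl⟩ := hb
      have hyI : y ∈ I := by
        have heq : y = (↑ub⁻¹ : R) * (a * x + (ub : R) * y) := by
          rw [hax]
          linear_combination (-y : R) * ub.inv_mul
        rw [heq]
        exact I.mul_mem_left _ hzI
      by_cases hall : ∀ w ∈ I, w ∈ Ideal.span ({y} : Set R)
      · refine Or.inr (Or.inr (Or.inl (le_antisymm hall ?_)))
        rw [Ideal.span_le, Set.singleton_subset_iff]
        exact hyI
      · push_neg at hall
        obtain ⟨w, hwI, hw⟩ := hall
        have hwM := hIM hwI
        rw [hM, Ideal.mem_span_pair] at hwM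
        obtain ⟨c, d, rfl⟩ := hwM
        rcases hunit c with hc | ⟨h1, h2⟩
        · obtain ⟨v, hv⟩ := hc
          have hsub : c * x + d * y - d * y ∈ I := I.sub_mem hwI (I.mul_mem_left d hyI)
          have hxI : x ∈ I := by
            have heq : x = (↑v⁻¹ : R) * (c * x + d * y - d * y) := by
              have : c * x + d * y - d * y = c * x := by ring
              rw [this, ← hv]
              linear_combination (-x : R) * v.inv_mul
            rw [heq]
            exact I.mul_mem_left _ hsub
          exact Or.inl (hIeqM hxI hyI)
        · exfalso
          apply hw
          rw [Ideal.mem_span_singleton]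
          exact ⟨d, by rw [h1]; ring⟩
    · -- both nonunits: z = 0, contradiction
      exact absurd (by rw [hax, hby, add_zero]) hz0
end

section
/- Let R be a commutative local ring with maximal ideal M and suppose {x₁, x₂, x₃} extends to a minimal generating set of M with at least 3 elements. Then M + ⟨xᵢ⟩ is a prime ideal for each i, but ⟨xᵢ⟩ + ⟨xⱼ⟩ is not a prime ideal for distinct i, j ∈ {1,2,3}. -/
/-!
Since every generator lies in `M`, each `M + ⟨xᵢ⟩` is just `M`. In an Artinian ring every prime
is maximal, so in the local case the only prime is `M`; but `⟨xᵢ, xⱼ⟩ = M` would let the two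
generators `xᵢ, xⱼ` generate `M`, which minimality forbids as soon as there is a third one.
-/

open IsLocalRing

theorem Ideal.IsPrime.eq_maximalIdeal_of_isArtinianRing {R : Type*} [CommRing R] [IsLocalRing R]
    [IsArtinianRing R] {P : Ideal R} (hP : P.IsPrime) : P = maximalIdeal R :=
  eq_maximalIdeal (IsArtinianRing.isMaximal_of_isPrime P)

theorem Submodule.eq_univ_of_span_range_le_span_image {R M ι : Type*} [Semiring R]
    [AddCommMonoid M] [Module R M] {x : ι → M}
    (hmin : ∀ i, x i ∉ span R (x '' {j | j ≠ i})) {s : Set ι}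
    (hle : span R (Set.range x) ≤ span R (x '' s)) : s = Set.univ := by
  refine Set.eq_univ_of_forall fun k => by_contra fun hk => hmin k ?_
  have hs : s ⊆ {j | j ≠ k} := fun j hj hjk => hk (hjk ▸ hj)
  exact span_mono (Set.image_mono hs) (hle (subset_span ⟨k, rfl⟩))

theorem stmt_4 {R : Type*} [CommRing R] [IsLocalRing R] [IsArtinianRing R]
    (m : ℕ) (hm : 3 ≤ m) (x : Fin m → R)
    (hspan : IsLocalRing.maximalIdeal R = Ideal.span (Set.range x))
    (hmin : ∀ i : Fin m, x i ∉ Ideal.span (x '' {j | j ≠ i})) :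
    (∀ i : Fin m, (i : ℕ) < 3 →
        (IsLocalRing.maximalIdeal R + Ideal.span {x i}).IsPrime) ∧
      (∀ i j : Fin m, (i : ℕ) < 3 → (j : ℕ) < 3 → i ≠ j →
        ¬(Ideal.span {x i} + Ideal.span {x j}).IsPrime) := by
  refine ⟨fun i _ => ?_, fun i j _ _ hij hP => ?_⟩
  · have hxi : Ideal.span {x i} ≤ maximalIdeal R :=
      (Ideal.span_singleton_le_iff_mem _).2 (hspan ▸ Ideal.subset_span ⟨i, rfl⟩)
    rw [Ideal.add_eq_sup, sup_eq_left.2 hxi]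
    exact (maximalIdeal.isMaximal R).isPrime
  · have hpair : Ideal.span (x '' {i, j}) = maximalIdeal R := by
      rw [Set.image_pair, Ideal.span_insert, ← Ideal.add_eq_sup]
      exact hP.eq_maximalIdeal_of_isArtinianRing
    have huniv : ({i, j} : Set (Fin m)) = Set.univ :=
      Submodule.eq_univ_of_span_range_le_span_image hmin (hpair.trans hspan).ge
    have hcard := congrArg Set.ncard huniv
    rw [Set.ncard_pair hij, Set.ncard_univ, Nat.card_eq_fintype_card, Fintype.card_fin] at hcard
    omega
end

section
/- Let R be a commutative local ring with maximal ideal M = ⟨x, y⟩, where {x, y} is a minimal generating set and x² = y² = 0. If xy = 0, then any two distinct nonzero proper ideals of R have prime sum; that is, the prime ideal sum graph PIS(R) is a complete graph on |R/M| + 2 vertices. -/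
private lemma stmt_11_card_aux {α β : Type*} [Fintype β] (h : Nat.card α = Nat.card β + 2) :
    Nat.card α = Fintype.card β + 2 := by
  rw [← Nat.card_eq_fintype_card]; exact h

theorem stmt_11 {R : Type*} [CommRing R] [IsLocalRing R]
    (x y : R)
    (hM : IsLocalRing.maximalIdeal R = Ideal.span {x, y})
    (hxy : x ∉ Ideal.span ({y} : Set R)) (hyx : y ∉ Ideal.span ({x} : Set R))
    (hx2 : x ^ 2 = 0) (hy2 : y ^ 2 = 0) (hxy0 : x * y = 0)
    [Fintype (R ⧸ IsLocalRing.maximalIdeal R)] :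
    (∀ I J : Ideal R, I ≠ ⊥ → I ≠ ⊤ → J ≠ ⊥ → J ≠ ⊤ → I ≠ J → (I + J).IsPrime) ∧
      Nat.card {I : Ideal R // I ≠ ⊥ ∧ I ≠ ⊤} =
        Fintype.card (R ⧸ IsLocalRing.maximalIdeal R) + 2 := by
  classical
  let M : Ideal R := IsLocalRing.maximalIdeal R
  have hMspan : M = Ideal.span {x, y} := hM
  have hxM : x ∈ M := by rw [hMspan]; exact Ideal.subset_span (by simp)
  have hyM : y ∈ M := by rw [hMspan]; exact Ideal.subset_span (by simp)
  have hmul : ∀ a ∈ M, ∀ b ∈ M, a * b = 0 := by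
    intro a ha b hb
    rw [hMspan] at ha hb
    obtain ⟨p, q, rfl⟩ := Ideal.mem_span_pair.1 ha
    obtain ⟨r, s, rfl⟩ := Ideal.mem_span_pair.1 hb
    linear_combination (p * r) * hx2 + (q * s) * hy2 + (p * s + q * r) * hxy0
  have hx0 : x ≠ 0 := fun h => hxy (h ▸ Ideal.zero_mem _)
  have hy0 : y ≠ 0 := fun h => hyx (h ▸ Ideal.zero_mem _)
  have hnonunit : ∀ c : R, ¬IsUnit c → c ∈ M := fun c hc =>
    (IsLocalRing.mem_maximalIdeal c).2 hc
  have hMtop : M ≠ ⊤ := (IsLocalRing.maximalIdeal.isMaximal R).ne_top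
  have hne_top : ∀ I : Ideal R, I ≤ M → I ≠ ⊤ := fun I hle hT =>
    hMtop (top_unique (hT ▸ hle))
  -- key dichotomy
  have hdich : ∀ a b : R, a ∈ M → b ∈ M → a ≠ 0 →
      b ∈ Ideal.span {a} ∨ Ideal.span ({a, b} : Set R) = M := by
    intro a b haM hbM ha0
    have haM' := haM; have hbM' := hbM
    rw [hMspan] at haM' hbM'
    obtain ⟨c, d, rfl⟩ := Ideal.mem_span_pair.1 haM'
    obtain ⟨c', d', rfl⟩ := Ideal.mem_span_pair.1 hbM'
    by_cases hΔ : IsUnit (c * d' - c' * d)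
    · right
      obtain ⟨e, he⟩ := isUnit_iff_exists_inv.1 hΔ
      apply le_antisymm
      · rw [Ideal.span_le]
        rintro z hz
        simp only [Set.mem_insert_iff, Set.mem_singleton_iff] at hz
        rcases hz with rfl | rfl
        · exact haM
        · exact hbM
      · rw [hMspan, Ideal.span_le]
        rintro z hz
        simp only [Set.mem_insert_iff, Set.mem_singleton_iff] at hz
        rcases hz with rfl | rfl
        · exact Ideal.mem_span_pair.2 ⟨e * d', -(e * d), by linear_combination z * he⟩
        · exact Ideal.mem_span_pair.2 ⟨-(e * c'), e * c, by linear_combination z * he⟩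
    · left
      have hΔM : (c * d' - c' * d) ∈ M := hnonunit _ hΔ
      by_cases hc : IsUnit c
      · obtain ⟨e, he⟩ := isUnit_iff_exists_inv.1 hc
        have hΔy : (c * d' - c' * d) * y = 0 := hmul _ hΔM y hyM
        rw [Ideal.mem_span_singleton']
        exact ⟨e * c', by linear_combination (c' * x + d' * y) * he - e * hΔy⟩
      · have hcM := hnonunit c hc
        have hcx : c * x = 0 := hmul c hcM x hxM
        by_cases hd : IsUnit d
        · obtain ⟨e, he⟩ := isUnit_iff_exists_inv.1 hd
          have hΔx : (c * d' - c' * d) * x = 0 := hmul _ hΔM x hxM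
          rw [Ideal.mem_span_singleton']
          exact ⟨e * d', by linear_combination (c' * x + d' * y) * he + e * hΔx⟩
        · exfalso
          have hdM := hnonunit d hd
          have hdy : d * y = 0 := hmul d hdM y hyM
          exact ha0 (by linear_combination hcx + hdy)
  -- every nonzero proper ideal other than M is principal
  have hprin : ∀ I : Ideal R, I ≠ ⊥ → I ≠ ⊤ → I ≠ M →
      ∃ a, a ∈ M ∧ a ≠ 0 ∧ I = Ideal.span {a} := by
    intro I h0 ht hMne
    have hIM : I ≤ M := IsLocalRing.le_maximalIdeal ht
    obtain ⟨a, haI, ha0⟩ := Submodule.exists_mem_ne_zero_of_ne_bot h0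
    refine ⟨a, hIM haI, ha0, le_antisymm ?_ ?_⟩
    · intro b hb
      rcases hdich a b (hIM haI) (hIM hb) ha0 with h | h
      · exact h
      · exfalso
        apply hMne
        refine le_antisymm hIM ?_
        rw [← h, Ideal.span_le]
        rintro z hz
        simp only [Set.mem_insert_iff, Set.mem_singleton_iff] at hz
        rcases hz with rfl | rfl
        · exact haI
        · exact hb
    · rw [Ideal.span_le, Set.singleton_subset_iff]; exact haI
  constructor
  · -- part 1
    intro I J hI0 hIT hJ0 hJT hne
    suffices h : I + J = M by
      rw [h]; exact (IsLocalRing.maximalIdeal.isMaximal R).isPrime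
    have hIM : I ≤ M := IsLocalRing.le_maximalIdeal hIT
    have hJM : J ≤ M := IsLocalRing.le_maximalIdeal hJT
    by_cases hIM' : I = M
    · rw [Submodule.add_eq_sup, hIM']
      exact le_antisymm (sup_le le_rfl hJM) le_sup_left
    by_cases hJM' : J = M
    · rw [Submodule.add_eq_sup, hJM']
      exact le_antisymm (sup_le hIM le_rfl) le_sup_right
    obtain ⟨a, haM, ha0, rfl⟩ := hprin I hI0 hIT hIM'
    obtain ⟨b, hbM, hb0, rfl⟩ := hprin J hJ0 hJT hJM'
    rcases hdich a b haM hbM ha0 with hba | hs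
    · rcases hdich b a hbM haM hb0 with hab | hs'
      · exact absurd (le_antisymm
          (by rw [Ideal.span_le, Set.singleton_subset_iff]; exact hab)
          (by rw [Ideal.span_le, Set.singleton_subset_iff]; exact hba)) hne
      · rw [Submodule.add_eq_sup, sup_comm, ← Ideal.span_union, ← Set.insert_eq]
        exact hs'
    · rw [Submodule.add_eq_sup, ← Ideal.span_union, ← Set.insert_eq]
      exact hs
  · -- part 2 : counting
    have hgsur := Ideal.Quotient.mk_surjective (I := M)
    set g : R ⧸ M → R := fun c => (hgsur c).choose with hgdef
    have hg : ∀ c, Ideal.Quotient.mk M (g c) = c := fun c => (hgsur c).choose_spec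
    have hspan_ne_bot : ∀ c : R, Ideal.span {x + c * y} ≠ ⊥ := by
      intro c h
      rw [Ideal.span_singleton_eq_bot] at h
      exact hxy (Ideal.mem_span_singleton'.2 ⟨-c, by linear_combination -h⟩)
    have hspan_le : ∀ c : R, Ideal.span {x + c * y} ≤ M := by
      intro c
      rw [Ideal.span_le, Set.singleton_subset_iff]
      exact add_mem hxM (Ideal.mul_mem_left _ c hyM)
    have hy_not : ∀ c : R, y ∉ Ideal.span {x + c * y} := by
      intro c hc
      obtain ⟨r, hr⟩ := Ideal.mem_span_singleton'.1 hc
      by_cases hru : IsUnit r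
      · obtain ⟨e, he⟩ := isUnit_iff_exists_inv.1 hru
        exact hxy (Ideal.mem_span_singleton'.2
          ⟨e - e * r * c, by linear_combination (-e) * hr + x * he⟩)
      · have hrM := hnonunit r hru
        have hrx : r * x = 0 := hmul r hrM x hxM
        have hrcM : r * c ∈ M := Ideal.mul_mem_right c _ hrM
        obtain ⟨e, he⟩ := isUnit_iff_exists_inv.1
          (IsLocalRing.isUnit_one_sub_self_of_mem_nonunits _
            ((IsLocalRing.mem_maximalIdeal _).1 hrcM))
        exact hy0 (by linear_combination (-y) * he - e * hr + e * hrx)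
    have hKey : ∀ c c' : R, Ideal.span {x + c * y} = Ideal.span {x + c' * y} →
        c - c' ∈ M := by
      intro c c' hcc
      have hx' : x + c * y ∈ Ideal.span {x + c' * y} := by
        rw [← hcc]; exact Ideal.subset_span rfl
      obtain ⟨r, hr⟩ := Ideal.mem_span_singleton'.1 hx'
      by_cases h1r : IsUnit (1 - r)
      · exfalso
        obtain ⟨e, he⟩ := isUnit_iff_exists_inv.1 h1r
        exact hxy (Ideal.mem_span_singleton'.2
          ⟨e * (r * c' - c), by linear_combination e * hr + x * he⟩)
      · have hrM1 : (1 - r) ∈ M := hnonunit _ h1r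
        have h2 : ¬IsUnit (r * c' - c) := by
          intro hu
          obtain ⟨e, he⟩ := isUnit_iff_exists_inv.1 hu
          exact hyx (Ideal.mem_span_singleton'.2
            ⟨e * (1 - r), by linear_combination (-e) * hr + y * he⟩)
        have hM2 : r * c' - c ∈ M := hnonunit _ h2
        have heq : c - c' = -(r * c' - c) - (1 - r) * c' := by ring
        rw [heq]
        exact sub_mem (neg_mem hM2) (Ideal.mul_mem_right _ _ hrM1)
    -- the bijection
    let F : (R ⧸ M) ⊕ Bool → {I : Ideal R // I ≠ ⊥ ∧ I ≠ ⊤} := fun z =>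
      match z with
      | Sum.inl c => ⟨Ideal.span {x + g c * y}, hspan_ne_bot _, hne_top _ (hspan_le _)⟩
      | Sum.inr false => ⟨Ideal.span {y},
          fun h => hy0 (Ideal.span_singleton_eq_bot.1 h),
          hne_top _ (by rw [Ideal.span_le, Set.singleton_subset_iff]; exact hyM)⟩
      | Sum.inr true => ⟨M, fun h => hy0 ((Submodule.mem_bot R).1 (h ▸ hyM)), hMtop⟩
    have hyspanM : Ideal.span ({y} : Set R) ≠ M := by
      intro h
      exact hxy (h ▸ hxM)
    have hF : Function.Bijective F := by
      constructor
      · rintro (c | b) (c' | b') h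
        · have h' : Ideal.span {x + g c * y} = Ideal.span {x + g c' * y} :=
            congrArg Subtype.val h
          have := hKey _ _ h'
          have hq : Ideal.Quotient.mk M (g c) = Ideal.Quotient.mk M (g c') :=
            Ideal.Quotient.eq.2 this
          rw [hg, hg] at hq
          rw [hq]
        · exfalso
          have h' : Ideal.span {x + g c * y} = (F (Sum.inr b')).1 :=
            congrArg Subtype.val h
          cases b'
          · exact hy_not _ (h'.symm ▸ Ideal.subset_span rfl :
              y ∈ Ideal.span {x + g c * y})
          · exact hy_not _ ((h' : Ideal.span {x + g c * y} = M) ▸ hyM :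
              y ∈ Ideal.span {x + g c * y})
        · exfalso
          have h' : (F (Sum.inr b)).1 = Ideal.span {x + g c' * y} :=
            congrArg Subtype.val h
          cases b
          · exact hy_not _ (h' ▸ Ideal.subset_span rfl :
              y ∈ Ideal.span {x + g c' * y})
          · exact hy_not _ ((h'.symm : Ideal.span {x + g c' * y} = M) ▸ hyM :
              y ∈ Ideal.span {x + g c' * y})
        · have h' : (F (Sum.inr b)).1 = (F (Sum.inr b')).1 := congrArg Subtype.val h
          cases b <;> cases b'
          · rfl
          · exact absurd (h' : Ideal.span {y} = M) hyspanM
          · exact absurd ((h' : M = Ideal.span {y}).symm) hyspanM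
          · rfl
      · rintro ⟨I, hI0, hIT⟩
        by_cases hIM : I = M
        · exact ⟨Sum.inr true, Subtype.ext hIM.symm⟩
        · obtain ⟨a, haM, ha0, rfl⟩ := hprin I hI0 hIT hIM
          rw [hMspan] at haM
          obtain ⟨c, d, rfl⟩ := Ideal.mem_span_pair.1 haM
          by_cases hc : IsUnit c
          · obtain ⟨e, he⟩ := isUnit_iff_exists_inv.1 hc
            refine ⟨Sum.inl (Ideal.Quotient.mk M (e * d)), Subtype.ext ?_⟩
            have h1 : g (Ideal.Quotient.mk M (e * d)) - e * d ∈ M :=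
              Ideal.Quotient.eq.1 (hg _)
            have h2 : (g (Ideal.Quotient.mk M (e * d)) - e * d) * y = 0 :=
              hmul _ h1 y hyM
            have h3 : x + g (Ideal.Quotient.mk M (e * d)) * y = x + e * d * y := by
              linear_combination h2
            show Ideal.span {x + g (Ideal.Quotient.mk M (e * d)) * y} =
              Ideal.span {c * x + d * y}
            rw [h3]
            apply le_antisymm <;> rw [Ideal.span_le, Set.singleton_subset_iff]
            · exact Ideal.mem_span_singleton'.2 ⟨e, by linear_combination x * he⟩
            · exact Ideal.mem_span_singleton'.2 ⟨c, by linear_combination (d * y) * he⟩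
          · have hcM := hnonunit c hc
            have hcx : c * x = 0 := hmul c hcM x hxM
            have hd : IsUnit d := by
              by_contra hd
              have hdy : d * y = 0 := hmul d (hnonunit d hd) y hyM
              exact ha0 (by linear_combination hcx + hdy)
            obtain ⟨e, he⟩ := isUnit_iff_exists_inv.1 hd
            refine ⟨Sum.inr false, Subtype.ext ?_⟩
            show Ideal.span ({y} : Set R) = Ideal.span {c * x + d * y}
            apply le_antisymm <;> rw [Ideal.span_le, Set.singleton_subset_iff]
            · exact Ideal.mem_span_singleton'.2
                ⟨e, by linear_combination e * hcx + y * he⟩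
            · exact Ideal.mem_span_singleton'.2 ⟨d, by linear_combination -hcx⟩
    apply stmt_11_card_aux
    rw [← Nat.card_congr (Equiv.ofBijective F hF), Nat.card_sum]
    have hb : Nat.card Bool = 2 := by simp [Nat.card_eq_fintype_card]
    rw [hb]
end

section
/- Let R be a commutative local ring with maximal ideal M = ⟨x, y⟩, where {x, y} is a minimal generating set, x² = y² = 0, and xy ≠ 0. Then the ideal ⟨xy⟩ is a nonzero proper ideal whose sum with M is prime, but ⟨xy⟩ + I is not a prime ideal for every nonzero proper ideal I of R with I ≠ M and I ≠ ⟨xy⟩. -/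
theorem stmt_12 {R : Type*} [CommRing R] [IsLocalRing R] [IsArtinianRing R]
    (x y : R)
    (hM : IsLocalRing.maximalIdeal R = Ideal.span {x, y})
    (hxy : x ∉ Ideal.span ({y} : Set R)) (hyx : y ∉ Ideal.span ({x} : Set R))
    (hx2 : x ^ 2 = 0) (hy2 : y ^ 2 = 0) (hxy0 : x * y ≠ 0) :
    Ideal.span ({x * y} : Set R) ≠ ⊥ ∧ Ideal.span ({x * y} : Set R) ≠ ⊤ ∧
      (Ideal.span ({x * y} : Set R) + IsLocalRing.maximalIdeal R).IsPrime ∧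
      ∀ I : Ideal R, I ≠ ⊥ → I ≠ ⊤ → I ≠ IsLocalRing.maximalIdeal R →
        I ≠ Ideal.span ({x * y} : Set R) →
        ¬(Ideal.span ({x * y} : Set R) + I).IsPrime := by
  have hxM : x ∈ IsLocalRing.maximalIdeal R := by
    rw [hM]; exact Ideal.subset_span (by simp)
  have hyM : y ∈ IsLocalRing.maximalIdeal R := by
    rw [hM]; exact Ideal.subset_span (by simp)
  have hspanle : Ideal.span ({x * y} : Set R) ≤ IsLocalRing.maximalIdeal R := by
    rw [Ideal.span_le]
    intro z hz
    simp only [Set.mem_singleton_iff] at hz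
    subst hz
    exact Ideal.mul_mem_right _ _ hxM
  refine ⟨?_, ?_, ?_, ?_⟩
  · intro h
    apply hxy0
    have : x * y ∈ Ideal.span ({x * y} : Set R) := Ideal.subset_span rfl
    rw [h] at this
    simpa using this
  · intro h
    exact (IsLocalRing.maximalIdeal.isMaximal R).ne_top (top_le_iff.mp (h ▸ hspanle))
  · rw [Submodule.add_eq_sup, sup_eq_right.mpr hspanle]
    exact (IsLocalRing.maximalIdeal.isMaximal R).isPrime
  · intro I _ hItop hIM _ hP
    have hIle : I ≤ IsLocalRing.maximalIdeal R :=
      IsLocalRing.le_maximalIdeal hItop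
    -- the prime must be the maximal ideal
    have hPM : Ideal.span ({x * y} : Set R) + I = IsLocalRing.maximalIdeal R :=
      IsLocalRing.eq_maximalIdeal (IsArtinianRing.isMaximal_of_isPrime _)
    -- x and y lie in span{xy} ⊔ I
    have hxmem : x ∈ Ideal.span ({x * y} : Set R) ⊔ I := by
      rw [← Submodule.add_eq_sup, hPM]; exact hxM
    have hymem : y ∈ Ideal.span ({x * y} : Set R) ⊔ I := by
      rw [← Submodule.add_eq_sup, hPM]; exact hyM
    obtain ⟨s, hs, a, ha, hsa⟩ := Submodule.mem_sup.mp hxmem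
    obtain ⟨r, hr⟩ := Ideal.mem_span_singleton'.mp hs
    -- x*y ∈ I
    have hxyI : x * y ∈ I := by
      have : x * y = a * y := by
        have : (r * (x * y) + a) * y = a * y := by
          linear_combination (r * x) * hy2
        rw [← this, hr, hsa]
      rw [this]
      exact Ideal.mul_mem_right _ _ ha
    have hxI : x ∈ I := by
      rw [← hsa, ← hr]
      exact I.add_mem (I.mul_mem_left r hxyI) ha
    obtain ⟨s', hs', b, hb, hsb⟩ := Submodule.mem_sup.mp hymem
    obtain ⟨r', hr'⟩ := Ideal.mem_span_singleton'.mp hs'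
    have hyI : y ∈ I := by
      rw [← hsb, ← hr']
      exact I.add_mem (I.mul_mem_left r' hxyI) hb
    apply hIM
    refine le_antisymm hIle ?_
    rw [hM, Ideal.span_le]
    intro z hz
    rcases hz with hz | hz
    · exact hz ▸ hxI
    · simp only [Set.mem_singleton_iff] at hz; exact hz ▸ hyI
end

section
/- Let R be a commutative local ring whose maximal ideal M has a minimal generating set {x₁, ..., x_m} with m ≥ 4. Then with I = ⟨x₄⟩, J₁ = ⟨x₂, x₃, ..., x_m⟩, J₂ = ⟨x₁, x₃, ..., x_m⟩, J₃ = ⟨x₁, x₂, x₄, ..., x_m⟩, each pairwise sum Jᵢ + Jⱼ (i ≠ j) equals M and is prime, while I + Jᵢ is not a prime ideal for any i ∈ {1, 2, 3}. -/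
open Ideal IsLocalRing

theorem Ideal.span_image_ne_sup_span_image_ne {R ι : Type*} [Semiring R] (x : ι → R) {i k : ι}
    (hik : i ≠ k) :
    span (x '' {j | j ≠ i}) ⊔ span (x '' {j | j ≠ k}) = span (Set.range x) := by
  have hcover : {j | j ≠ i} ∪ {j | j ≠ k} = Set.univ :=
    Set.eq_univ_of_forall fun j => by
      by_cases hj : j = i
      · exact Or.inr (hj ▸ hik)
      · exact Or.inl hj
  rw [← span_union, ← Set.image_union, hcover, Set.image_univ]

theorem Ideal.span_singleton_sup_span_image_ne {R ι : Type*} [Semiring R] (x : ι → R) {a i : ι}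
    (hai : a ≠ i) :
    span {x a} ⊔ span (x '' {j | j ≠ i}) = span (x '' {j | j ≠ i}) :=
  sup_eq_right.2 <| span_singleton_le_iff_mem _ |>.2 <| subset_span ⟨a, hai, rfl⟩

/-- In a zero-dimensional local ring the only prime ideal is the maximal one. -/
theorem IsLocalRing.not_isPrime_span_image_ne {R ι : Type*} [CommRing R] [IsLocalRing R]
    [Ring.KrullDimLE 0 R] (x : ι → R) (hspan : maximalIdeal R = span (Set.range x)) {i : ι}
    (hi : x i ∉ span (x '' {j | j ≠ i})) :
    ¬ (span (x '' {j | j ≠ i})).IsPrime := fun hprime => by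
  apply hi
  rw [Ring.KrullDimLE.eq_maximalIdeal_of_isPrime (span (x '' {j | j ≠ i})), hspan]
  exact subset_span ⟨i, rfl⟩

theorem stmt_13 {R : Type*} [CommRing R] [IsLocalRing R] [IsArtinianRing R]
    (m : ℕ) (hm : 4 ≤ m) (x : Fin m → R)
    (hspan : IsLocalRing.maximalIdeal R = Ideal.span (Set.range x))
    (hmin : ∀ i : Fin m, x i ∉ Ideal.span (x '' {j | j ≠ i})) :
    let I : Ideal R := Ideal.span {x ⟨3, by omega⟩}
    let J₁ : Ideal R := Ideal.span (x '' {j | j ≠ ⟨0, by omega⟩})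
    let J₂ : Ideal R := Ideal.span (x '' {j | j ≠ ⟨1, by omega⟩})
    let J₃ : Ideal R := Ideal.span (x '' {j | j ≠ ⟨2, by omega⟩})
    (J₁ + J₂ = IsLocalRing.maximalIdeal R ∧ (J₁ + J₂).IsPrime) ∧
    (J₁ + J₃ = IsLocalRing.maximalIdeal R ∧ (J₁ + J₃).IsPrime) ∧
    (J₂ + J₃ = IsLocalRing.maximalIdeal R ∧ (J₂ + J₃).IsPrime) ∧
    ¬(I + J₁).IsPrime ∧ ¬(I + J₂).IsPrime ∧ ¬(I + J₃).IsPrime := by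
  intro I J₁ J₂ J₃
  have hpair {i k : Fin m} (hik : i ≠ k) :
      span (x '' {j | j ≠ i}) + span (x '' {j | j ≠ k}) = maximalIdeal R := by
    rw [hspan]
    exact span_image_ne_sup_span_image_ne x hik
  have hprime {i k : Fin m} (hik : i ≠ k) :
      (span (x '' {j | j ≠ i}) + span (x '' {j | j ≠ k})).IsPrime :=
    hpair hik ▸ (maximalIdeal.isMaximal R).isPrime
  have hnot {i : Fin m} (h3i : ⟨3, by omega⟩ ≠ i) : ¬ (I + span (x '' {j | j ≠ i})).IsPrime := by
    rw [Submodule.add_eq_sup, span_singleton_sup_span_image_ne x h3i]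
    exact not_isPrime_span_image_ne x hspan (hmin i)
  exact ⟨⟨hpair (by simp), hprime (by simp)⟩, ⟨hpair (by simp), hprime (by simp)⟩,
    ⟨hpair (by simp), hprime (by simp)⟩, hnot (by simp), hnot (by simp), hnot (by simp)⟩
end

section
/- Let R be a commutative Artinian local principal ideal ring with maximal ideal M of nilpotent index n (Mⁿ = 0, Mⁿ⁻¹ ≠ 0). Then the nonzero proper ideals of R are exactly M, M², ..., Mⁿ⁻¹, and in the prime ideal sum graph PIS(R), the vertex M is adjacent to every other vertex and no two of M², ..., Mⁿ⁻¹ are adjacent; i.e., PIS(R) is a star graph K_{1, n−2}. -/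
open Classical in
theorem stmt_18 {R : Type*} [CommRing R] [IsLocalRing R] [IsArtinianRing R]
    (hprin : (IsLocalRing.maximalIdeal R).IsPrincipal)
    (n : ℕ) (hn : 2 ≤ n)
    (hnil : IsLocalRing.maximalIdeal R ^ n = ⊥)
    (hne : IsLocalRing.maximalIdeal R ^ (n - 1) ≠ ⊥) :
    (∀ I : Ideal R, I ≠ ⊥ → I ≠ ⊤ →
        ∃ i : ℕ, 1 ≤ i ∧ i ≤ n - 1 ∧ I = IsLocalRing.maximalIdeal R ^ i) ∧
    (∀ i : ℕ, 2 ≤ i → i ≤ n - 1 →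
        (IsLocalRing.maximalIdeal R + IsLocalRing.maximalIdeal R ^ i).IsPrime) ∧
    (∀ i j : ℕ, 2 ≤ i → i ≤ n - 1 → 2 ≤ j → j ≤ n - 1 → i ≠ j →
        ¬(IsLocalRing.maximalIdeal R ^ i + IsLocalRing.maximalIdeal R ^ j).IsPrime) := by
  set M := IsLocalRing.maximalIdeal R with hM
  -- stabilization lemma
  have hstab : ∀ k : ℕ, k ≤ n → M ^ k = M ^ (k + 1) → M ^ k = ⊥ := by
    intro k hk h
    have key : ∀ j : ℕ, M ^ k ≤ M ^ (k + j) := by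
      intro j
      induction j with
      | zero => simp
      | succ j ih =>
        calc M ^ k = M ^ (k + 1) := h
        _ = M ^ k * M := by ring
        _ ≤ M ^ (k + j) * M := Ideal.mul_mono_left ih
        _ = M ^ (k + j + 1) := by ring
    have := key (n - k)
    rw [Nat.add_sub_cancel' hk, hnil] at this
    exact le_bot_iff.mp this
  -- powers up to n-1 are nonzero
  have hnz : ∀ k : ℕ, k ≤ n - 1 → M ^ k ≠ ⊥ := by
    intro k hk h
    exact hne (le_bot_iff.mp (h ▸ Ideal.pow_le_pow_right hk))
  -- M^k not prime for 2 ≤ k ≤ n-1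
  have hnp : ∀ k : ℕ, 2 ≤ k → k ≤ n - 1 → ¬ (M ^ k).IsPrime := by
    intro k h2 hk hp
    have hmul : M ^ (k - 1) * M ≤ M ^ k := by
      rw [← pow_succ, Nat.sub_add_cancel (by omega)]
    rcases (Ideal.IsPrime.mul_le hp).mp hmul with h | h
    · -- M^(k-1) ≤ M^k, so M^(k-1) = M^k, hence ⊥
      have heq : M ^ (k - 1) = M ^ (k - 1 + 1) := by
        refine le_antisymm ?_ (Ideal.pow_le_pow_right (by omega))
        rw [Nat.sub_add_cancel (by omega)]; exact h
      have := hstab (k - 1) (by omega) heq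
      exact hnz (k - 1) (by omega) this
    · -- M ≤ M^k ≤ M^2, so M = M^2 hence M = ⊥
      have heq : M ^ 1 = M ^ (1 + 1) := by
        refine le_antisymm ?_ (Ideal.pow_le_pow_right (by omega))
        rw [pow_one]
        exact le_trans h (Ideal.pow_le_pow_right (by omega))
      have := hstab 1 (by omega) heq
      exact hnz 1 (by omega) this
  refine ⟨?_, ?_, ?_⟩
  · -- classification of ideals
    intro I hI0 hIT
    obtain ⟨t, ht⟩ := hprin
    have hIM : I ≤ M := IsLocalRing.le_maximalIdeal hIT
    have hex : ∃ j : ℕ, ¬ I ≤ M ^ j := by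
      refine ⟨n, fun h => hI0 (le_bot_iff.mp (hnil ▸ h))⟩
    set j := Nat.find hex with hj
    have hjspec : ¬ I ≤ M ^ j := Nat.find_spec hex
    have hj2 : 2 ≤ j := by
      rcases Nat.lt_or_ge j 2 with h | h
      · interval_cases j
        · exact absurd (by simp) hjspec
        · exact absurd (by simpa using hIM) hjspec
      · exact h
    have hjn : j ≤ n := Nat.find_le (fun h => hI0 (le_bot_iff.mp (hnil ▸ h)))
    refine ⟨j - 1, by omega, by omega, ?_⟩
    have hle : I ≤ M ^ (j - 1) := by
      by_contra h
      have h2 : j ≤ j - 1 := Nat.find_le h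
      omega
    have hnle : ¬ I ≤ M ^ (j - 1 + 1) := by
      rwa [Nat.sub_add_cancel (by omega)]
    obtain ⟨x, hxI, hxn⟩ := SetLike.not_le_iff_exists.mp hnle
    refine le_antisymm hle ?_
    have hMt : M = Ideal.span {t} := ht
    have hxM : x ∈ M ^ (j - 1) := hle hxI
    rw [hMt, Ideal.span_singleton_pow] at hxM
    obtain ⟨c, hc⟩ := Ideal.mem_span_singleton'.mp hxM
    have hcu : IsUnit c := by
      by_contra hcu
      apply hxn
      have hcM : c ∈ M := hcu
      rw [hMt] at hcM
      obtain ⟨d, hd⟩ := Ideal.mem_span_singleton'.mp hcM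
      rw [hMt, Ideal.span_singleton_pow]
      exact Ideal.mem_span_singleton'.mpr ⟨d, by rw [← hc, ← hd]; ring⟩
    obtain ⟨u, hu⟩ := hcu
    rw [hMt, Ideal.span_singleton_pow, Ideal.span_le]
    intro y hy
    simp only [Set.mem_singleton_iff] at hy
    subst hy
    have : (t : R) ^ (j - 1) = (↑u⁻¹ : R) * x := by
      rw [← hc, ← hu, ← mul_assoc, Units.inv_mul, one_mul]
    rw [this]
    exact Ideal.mul_mem_left I _ hxI
  · -- M + M^i = M is prime
    intro i h2 hi
    have : M + M ^ i = M := by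
      rw [Ideal.add_eq_sup, sup_eq_left]
      calc M ^ i ≤ M ^ 1 := Ideal.pow_le_pow_right (by omega)
      _ = M := pow_one M
    rw [this]
    exact (IsLocalRing.maximalIdeal.isMaximal R).isPrime
  · -- M^i + M^j not prime
    intro i j h2i hi h2j hj hij hp
    rcases le_total i j with h | h
    · have : M ^ i + M ^ j = M ^ i := by
        rw [Ideal.add_eq_sup, sup_eq_left]
        exact Ideal.pow_le_pow_right h
      rw [this] at hp
      exact hnp i h2i hi hp
    · have : M ^ i + M ^ j = M ^ j := by
        rw [Ideal.add_eq_sup, sup_eq_right]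
        exact Ideal.pow_le_pow_right h
      rw [this] at hp
      exact hnp j h2j hj hp
end
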